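/- arXiv:1409.7681 — 5 statements merged into one kernel-verified Lean document; each statement's English description precedes it below -/
import Mathlib

section
/- Let a, b, c be positive reals satisfying the strict triangle inequalities, and let t > 0. Then the three positive reals a, √(b² + t), √(c² + t) also satisfy the strict triangle inequalities; that is, a euclidean triangle with these side lengths exists. -/
/-! The map `x ↦ √(x² + t)` (for `t ≥ 0`) dominates `|x|` and is `1`-Lipschitz. The first fact gives
`a < b + c ≤ √(b² + t) + √(c² + t)`; the second bounds `|√(b² + t) - √(c² + t)|` by `|b - c|`, which is
less than `a` by the other two triangle inequalities. -/

namespace Real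

theorem abs_le_sqrt_sq_add {t : ℝ} (ht : 0 ≤ t) (x : ℝ) : |x| ≤ √(x ^ 2 + t) := by
  rw [← sqrt_sq_eq_abs]
  exact sqrt_le_sqrt (by linarith)

theorem sqrt_sq_add_le_sqrt_sq_add_add_abs_sub {t : ℝ} (ht : 0 ≤ t) (x y : ℝ) :
    √(x ^ 2 + t) ≤ √(y ^ 2 + t) + |x - y| := by
  have hy := abs_le_sqrt_sq_add ht y
  have hx : |x| ≤ |y| + |x - y| := by simpa using abs_add_le y (x - y)
  rw [sqrt_le_iff]
  refine ⟨by positivity, ?_⟩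
  calc x ^ 2 + t = |x| ^ 2 + t := by rw [sq_abs]
    _ ≤ (|y| + |x - y|) ^ 2 + t := by gcongr
    _ ≤ √(y ^ 2 + t) ^ 2 + 2 * √(y ^ 2 + t) * |x - y| + |x - y| ^ 2 := by
      rw [sq_sqrt (by positivity)]
      nlinarith [sq_abs y, abs_nonneg (x - y)]
    _ = (√(y ^ 2 + t) + |x - y|) ^ 2 := by ring

end Real

theorem deformed_triangle_exists_general (a b c t : ℝ)
    (h1 : a < b + c) (h2 : b < a + c) (h3 : c < a + b) (ht : 0 < t) :
    a < Real.sqrt (b ^ 2 + t) + Real.sqrt (c ^ 2 + t) ∧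
      Real.sqrt (b ^ 2 + t) < a + Real.sqrt (c ^ 2 + t) ∧
        Real.sqrt (c ^ 2 + t) < a + Real.sqrt (b ^ 2 + t) := by
  have hbc : |b - c| < a := abs_sub_lt_iff.2 ⟨by linarith, by linarith⟩
  have hcb : |c - b| < a := abs_sub_comm c b ▸ hbc
  refine ⟨?_, ?_, ?_⟩
  · calc a < |b| + |c| := h1.trans_le (add_le_add (le_abs_self b) (le_abs_self c))
      _ ≤ _ := add_le_add (Real.abs_le_sqrt_sq_add ht.le b) (Real.abs_le_sqrt_sq_add ht.le c)
  · linarith [Real.sqrt_sq_add_le_sqrt_sq_add_add_abs_sub ht.le b c]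
  · linarith [Real.sqrt_sq_add_le_sqrt_sq_add_add_abs_sub ht.le c b]

/-- If positive reals `a, b, c` satisfy the strict triangle inequalities and `t > 0`,
then `a, √(b² + t), √(c² + t)` also satisfy the strict triangle inequalities. -/
theorem deformed_triangle_exists (a b c t : ℝ) (ha : 0 < a) (hb : 0 < b) (hc : 0 < c)
    (h1 : a < b + c) (h2 : b < a + c) (h3 : c < a + b) (ht : 0 < t) :
    a < Real.sqrt (b ^ 2 + t) + Real.sqrt (c ^ 2 + t) ∧
      Real.sqrt (b ^ 2 + t) < a + Real.sqrt (c ^ 2 + t) ∧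
        Real.sqrt (c ^ 2 + t) < a + Real.sqrt (b ^ 2 + t) :=
  deformed_triangle_exists_general a b c t h1 h2 h3 ht
end

section
/- For b ≥ 0 and t ∈ ℝ, write b_t for the unique nonnegative real with cosh b_t = eᵗ · cosh b. Then for every t > 0 and all reals b > c ≥ 0, one has b_t − c_t < b − c. -/
/-!
Since `cosh` is increasing on `[0, ∞)`, it suffices that `cosh b_t < cosh (c_t + (b - c))`.
Expanding both `cosh b = cosh (c + (b - c))` and `cosh (c_t + (b - c))` by the addition formula,
this reduces to `eᵗ sinh c < sinh c_t`, which holds because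
`sinh² c_t = e²ᵗ cosh² c - 1 > e²ᵗ (cosh² c - 1) = (eᵗ sinh c)²`.
-/

namespace Real

theorem mul_sinh_lt_sinh_of_cosh_eq {k c c' : ℝ} (hk : 1 < k) (hc' : 0 ≤ c')
    (h : cosh c' = k * cosh c) : k * sinh c < sinh c' := by
  have hsq : (k * sinh c) ^ 2 < sinh c' ^ 2 := by
    have hk2 : 1 < k ^ 2 := one_lt_pow₀ hk two_ne_zero
    rw [mul_pow, sinh_sq, sinh_sq, h]
    nlinarith
  exact lt_of_pow_lt_pow_left₀ 2 (sinh_nonneg_iff.mpr hc') hsq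

theorem mul_cosh_add_lt_cosh_add {k c c' d : ℝ} (hk : 1 < k) (hc' : 0 ≤ c') (hd : 0 < d)
    (h : cosh c' = k * cosh c) : k * cosh (c + d) < cosh (c' + d) := by
  have hsinh :=
    mul_lt_mul_of_pos_right (mul_sinh_lt_sinh_of_cosh_eq hk hc' h) (sinh_pos_iff.mpr hd)
  rw [cosh_add, cosh_add, h]
  linarith

end Real

theorem hyperbolic_deform_contraction_general (b c t : ℝ) (hcb : c < b) (ht : 0 < t)
    (bt ct : ℝ) (hct0 : 0 ≤ ct)
    (hbt : Real.cosh bt = Real.exp t * Real.cosh b)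
    (hct : Real.cosh ct = Real.exp t * Real.cosh c) :
    bt - ct < b - c := by
  have hdeform : Real.cosh bt < Real.cosh (ct + (b - c)) := by
    have := Real.mul_cosh_add_lt_cosh_add (Real.one_lt_exp_iff.mpr ht) hct0 (sub_pos.mpr hcb) hct
    rwa [add_sub_cancel, ← hbt] at this
  have habs := Real.cosh_lt_cosh.mp hdeform
  rw [abs_of_nonneg (by linarith : 0 ≤ ct + (b - c))] at habs
  linarith [le_abs_self bt]

/-- If `b_t, c_t` are the unique nonnegative reals with `cosh b_t = eᵗ · cosh b`
and `cosh c_t = eᵗ · cosh c`, then for `t > 0` and `b > c ≥ 0` one has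
`b_t − c_t < b − c`. -/
theorem hyperbolic_deform_contraction (b c t : ℝ) (hc : 0 ≤ c) (hcb : c < b) (ht : 0 < t)
    (bt ct : ℝ) (hbt0 : 0 ≤ bt) (hct0 : 0 ≤ ct)
    (hbt : Real.cosh bt = Real.exp t * Real.cosh b)
    (hct : Real.cosh ct = Real.exp t * Real.cosh c) :
    bt - ct < b - c :=
  hyperbolic_deform_contraction_general b c t hcb ht bt ct hct0 hbt hct
end

section
/- For b ≥ 0 and t ∈ ℝ, write b_t for the unique nonnegative real with cosh b_t = eᵗ · cosh b. Let a, b, c be positive reals satisfying the strict triangle inequalities and let t > 0. Then the three positive reals a, b_t, c_t also satisfy the strict triangle inequalities; that is, a hyperbolic triangle with these side lengths exists. -/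
/-!
Put `λ = eᵗ ≥ 1`. From `sinh² b_t = λ² cosh² b - 1 ≥ λ² sinh² b` one gets `sinh b_t ≥ λ sinh b`,
so by the addition formula `cosh (a + c_t) ≥ λ cosh (a + c) > λ cosh b = cosh b_t` whenever
`b < a + c`. The inequality `a < b_t + c_t` is immediate since the deformation only lengthens
sides.
-/

open Real

section CoshDeformation

variable {l x y : ℝ}

theorem le_of_cosh_eq_mul_cosh (hl : 1 ≤ l) (hy : 0 ≤ y) (h : cosh y = l * cosh x) : x ≤ y := by
  have hcosh : cosh x ≤ cosh y := by
    rw [h]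
    exact le_mul_of_one_le_left (cosh_pos x).le hl
  rw [cosh_le_cosh, abs_of_nonneg hy] at hcosh
  exact (le_abs_self x).trans hcosh

theorem mul_sinh_le_sinh_of_cosh_eq_mul_cosh (hl : 1 ≤ l) (hy : 0 ≤ y)
    (h : cosh y = l * cosh x) : l * sinh x ≤ sinh y := by
  have hsq : (l * sinh x) ^ 2 ≤ sinh y ^ 2 := by
    have hl2 : 1 ≤ l ^ 2 := one_le_pow₀ hl
    rw [mul_pow, sinh_sq, sinh_sq, h]
    nlinarith
  exact (abs_le_of_sq_le_sq' hsq (sinh_nonneg_iff.mpr hy)).2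

theorem mul_cosh_add_le_cosh_add {a : ℝ} (ha : 0 ≤ a) (hl : 1 ≤ l) (hy : 0 ≤ y)
    (h : cosh y = l * cosh x) : l * cosh (a + x) ≤ cosh (a + y) := by
  have hsinh := mul_sinh_le_sinh_of_cosh_eq_mul_cosh hl hy h
  have hsinh_a : 0 ≤ sinh a := sinh_nonneg_iff.mpr ha
  rw [cosh_add, cosh_add, h]
  nlinarith

theorem lt_add_of_cosh_eq_mul_cosh {a b c yb yc : ℝ} (ha : 0 ≤ a) (hb : 0 ≤ b) (hbac : b < a + c)
    (hl : 1 ≤ l) (hyb : 0 ≤ yb) (hyc : 0 ≤ yc)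
    (hb' : cosh yb = l * cosh b) (hc' : cosh yc = l * cosh c) : yb < a + yc := by
  have hcosh : cosh yb < cosh (a + yc) :=
    calc cosh yb = l * cosh b := hb'
      _ < l * cosh (a + c) := by
        refine mul_lt_mul_of_pos_left ?_ (by linarith)
        rw [cosh_lt_cosh, abs_of_nonneg hb, abs_of_nonneg (by linarith)]
        exact hbac
      _ ≤ cosh (a + yc) := mul_cosh_add_le_cosh_add ha hl hyc hc'
  rwa [cosh_lt_cosh, abs_of_nonneg hyb, abs_of_nonneg (by linarith)] at hcosh

end CoshDeformation

/-- If positive reals `a, b, c` satisfy the strict triangle inequalities, `t > 0`, and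
`b_t, c_t` are the unique nonnegative reals with `cosh b_t = eᵗ · cosh b`,
`cosh c_t = eᵗ · cosh c`, then the positive reals `a, b_t, c_t` also satisfy the
strict triangle inequalities. -/
theorem hyperbolic_deformed_triangle_exists (a b c t : ℝ)
    (ha : 0 < a) (hb : 0 < b) (hc : 0 < c)
    (h1 : a < b + c) (h2 : b < a + c) (h3 : c < a + b) (ht : 0 < t)
    (bt ct : ℝ) (hbt0 : 0 ≤ bt) (hct0 : 0 ≤ ct)
    (hbt : Real.cosh bt = Real.exp t * Real.cosh b)
    (hct : Real.cosh ct = Real.exp t * Real.cosh c) :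
    0 < bt ∧ 0 < ct ∧ a < bt + ct ∧ bt < a + ct ∧ ct < a + bt := by
  have hl : 1 ≤ exp t := one_le_exp ht.le
  have hb_le : b ≤ bt := le_of_cosh_eq_mul_cosh hl hbt0 hbt
  have hc_le : c ≤ ct := le_of_cosh_eq_mul_cosh hl hct0 hct
  exact ⟨hb.trans_le hb_le, hc.trans_le hc_le, by linarith,
    lt_add_of_cosh_eq_mul_cosh ha.le hb.le h2 hl hbt0 hct0 hbt hct,
    lt_add_of_cosh_eq_mul_cosh ha.le hc.le h3 hl hct0 hbt0 hct hbt⟩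
end

section
/- Let a, b, c be positive reals satisfying the strict triangle inequalities. For t ≥ 0 write b_t, c_t for the unique nonnegative reals with cosh b_t = eᵗ · cosh b and cosh c_t = eᵗ · cosh c. Then arccos((cosh b_t · cosh c_t − cosh a) / (sinh b_t · sinh c_t)) tends to 0 as t → +∞. -/
/-!
Dividing numerator and denominator by `cosh b_t * cosh c_t`, the cosine of the angle becomes
`(1 - cosh a / (cosh b_t * cosh c_t)) / (tanh b_t * tanh c_t)`, which tends to `1` because
`b_t, c_t ≥ t`: indeed `eᵗ ≤ eᵗ cosh b = cosh b_t ≤ e^{b_t}`.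
-/

open Real Filter Topology

namespace Real

lemma cosh_le_exp_of_nonneg {x : ℝ} (hx : 0 ≤ x) : cosh x ≤ exp x := by
  rw [cosh_eq]
  linarith [exp_le_exp.2 (show -x ≤ x by linarith)]

lemma tendsto_cosh_atTop : Tendsto cosh atTop atTop := by
  refine tendsto_atTop_mono (fun x => ?_) (tendsto_exp_atTop.atTop_div_const two_pos)
  rw [cosh_eq]
  linarith [exp_pos (-x)]

lemma tanh_eq_one_sub_two_div (x : ℝ) : tanh x = 1 - 2 / (exp (2 * x) + 1) := by
  have h : exp (2 * x) = exp x * exp x := by rw [← exp_add]; ring_nf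
  rw [tanh_eq, exp_neg, h]
  field_simp
  ring

lemma tendsto_tanh_atTop : Tendsto tanh atTop (𝓝 1) := by
  have h : Tendsto (fun x => exp (2 * x) + 1) atTop atTop :=
    tendsto_atTop_add_const_right _ _
      (tendsto_exp_atTop.comp (tendsto_id.const_mul_atTop two_pos))
  have := (tendsto_const_nhds (x := (2 : ℝ))).div_atTop h |>.const_sub 1
  rwa [sub_zero, ← funext tanh_eq_one_sub_two_div] at this

end Real

lemma cosh_mul_cosh_sub_div_sinh_mul_sinh (k x y : ℝ) :
    (cosh x * cosh y - k) / (sinh x * sinh y) =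
      (1 - k / (cosh x * cosh y)) / (tanh x * tanh y) := by
  have hxy : cosh x * cosh y ≠ 0 := (mul_pos (cosh_pos x) (cosh_pos y)).ne'
  rw [tanh_eq_sinh_div_cosh, tanh_eq_sinh_div_cosh, div_mul_div_comm, one_sub_div hxy,
    div_div_div_cancel_right₀ hxy]

lemma tendsto_hyperbolic_angle_zero_of_tendsto_atTop {α : Type*} {l : Filter α}
    {x y : α → ℝ} (k : ℝ) (hx : Tendsto x l atTop) (hy : Tendsto y l atTop) :
    Tendsto (fun i => arccos ((cosh (x i) * cosh (y i) - k) / (sinh (x i) * sinh (y i))))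
      l (𝓝 0) := by
  have hcosh : Tendsto (fun i => cosh (x i) * cosh (y i)) l atTop :=
    (tendsto_cosh_atTop.comp hx).atTop_mul_atTop₀ (tendsto_cosh_atTop.comp hy)
  have hratio : Tendsto (fun i => (cosh (x i) * cosh (y i) - k) / (sinh (x i) * sinh (y i)))
      l (𝓝 1) := by
    simp_rw [cosh_mul_cosh_sub_div_sinh_mul_sinh]
    have := (((tendsto_const_nhds (x := k)).div_atTop hcosh).const_sub (1 : ℝ)).div
      ((tendsto_tanh_atTop.comp hx).mul (tendsto_tanh_atTop.comp hy)) (by norm_num)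
    rwa [sub_zero, mul_one, div_one] at this
  rw [← arccos_one]
  exact (continuous_arccos.tendsto 1).comp hratio

lemma tendsto_atTop_of_cosh_eq_exp_mul {f : ℝ → ℝ} {β : ℝ} (hβ : 1 ≤ β)
    (hf : ∀ t, 0 ≤ t → 0 ≤ f t ∧ cosh (f t) = exp t * β) : Tendsto f atTop atTop := by
  refine tendsto_atTop_mono' _ ?_ tendsto_id
  filter_upwards [eventually_ge_atTop 0] with t ht
  obtain ⟨hf0, hfcosh⟩ := hf t ht
  have : exp t ≤ exp (f t) := calc
    exp t ≤ exp t * β := le_mul_of_one_le_right (exp_pos t).le hβ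
    _ = cosh (f t) := hfcosh.symm
    _ ≤ exp (f t) := cosh_le_exp_of_nonneg hf0
  exact exp_le_exp.1 this

theorem hyperbolic_deformed_angle_tendsto_zero_general (a b c : ℝ)
    (bt ct : ℝ → ℝ)
    (hbt : ∀ t, 0 ≤ t → 0 ≤ bt t ∧ Real.cosh (bt t) = Real.exp t * Real.cosh b)
    (hct : ∀ t, 0 ≤ t → 0 ≤ ct t ∧ Real.cosh (ct t) = Real.exp t * Real.cosh c) :
    Filter.Tendsto
      (fun t : ℝ => Real.arccos
        ((Real.cosh (bt t) * Real.cosh (ct t) - Real.cosh a) /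
          (Real.sinh (bt t) * Real.sinh (ct t))))
      Filter.atTop (nhds 0) :=
  tendsto_hyperbolic_angle_zero_of_tendsto_atTop (cosh a)
    (tendsto_atTop_of_cosh_eq_exp_mul (one_le_cosh b) hbt)
    (tendsto_atTop_of_cosh_eq_exp_mul (one_le_cosh c) hct)

/-- Let `a, b, c` be positive reals satisfying the strict triangle inequalities, and
for `t ≥ 0` let `b_t, c_t` be the unique nonnegative reals with
`cosh b_t = eᵗ · cosh b`, `cosh c_t = eᵗ · cosh c`. Then the angle
`arccos((cosh b_t · cosh c_t − cosh a) / (sinh b_t · sinh c_t))` of the hyperbolic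
triangle with sides `a, b_t, c_t` opposite to `a` tends to `0` as `t → +∞`. -/
theorem hyperbolic_deformed_angle_tendsto_zero (a b c : ℝ)
    (ha : 0 < a) (hb : 0 < b) (hc : 0 < c)
    (h1 : a < b + c) (h2 : b < a + c) (h3 : c < a + b)
    (bt ct : ℝ → ℝ)
    (hbt : ∀ t, 0 ≤ t → 0 ≤ bt t ∧ Real.cosh (bt t) = Real.exp t * Real.cosh b)
    (hct : ∀ t, 0 ≤ t → 0 ≤ ct t ∧ Real.cosh (ct t) = Real.exp t * Real.cosh c) :
    Filter.Tendsto
      (fun t : ℝ => Real.arccos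
        ((Real.cosh (bt t) * Real.cosh (ct t) - Real.cosh a) /
          (Real.sinh (bt t) * Real.sinh (ct t))))
      Filter.atTop (nhds 0) :=
  hyperbolic_deformed_angle_tendsto_zero_general a b c bt ct hbt hct
end

section
/- Let a, b, c be positive reals satisfying the strict triangle inequalities, and for x, y, z satisfying the strict triangle inequalities let α(x; y, z) := arccos((cosh y · cosh z − cosh x)/(sinh y · sinh z)) denote the angle opposite the side x of the hyperbolic triangle with sides x, y, z. For t > 0 write b_t, c_t for the unique nonnegative reals with cosh b_t = eᵗ · cosh b, cosh c_t = eᵗ · cosh c. Then α(a; b_t, c_t) + α(b_t; c_t, a) + α(c_t; a, b_t) < α(a; b, c) + α(b; c, a) + α(c; a, b); equivalently, the angle defect π − (sum of angles), which equals the hyperbolic area, is strictly larger for the deformed triangle. -/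
/-!
Write `A, B, C` for the hyperbolic cosines of the sides and `α, β, γ` for the opposite angles.
The law of cosines gives `cos β + cos γ > 0` and `cos α + cos (β + γ) > 0`, so the angle sum
`S` is less than `π`, and a direct computation gives
`cos (π - S) = (1 + A + B + C)² / ((1 + A)(1 + B)(1 + C)) - 1`.
The deformation replaces `B, C` by `uB, uC` with `u = eᵗ > 1`, and the right-hand side
strictly decreases in `u` because the triangle inequalities force `(B + C)² < 2(1 + A)BC`.
So the area `π - S` strictly increases.
-/

/-- The angle of the hyperbolic triangle with side lengths `x, y, z` opposite to the
side `x`, by the hyperbolic law of cosines. -/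
noncomputable def hypAngle (x y z : ℝ) : ℝ :=
  Real.arccos ((Real.cosh y * Real.cosh z - Real.cosh x) / (Real.sinh y * Real.sinh z))

open Real Set

lemma add_lt_pi_of_cos_add_cos_pos {p q : ℝ} (hp : p ∈ Icc 0 π) (hq : q ∈ Icc 0 π)
    (h : 0 < cos p + cos q) : p + q < π := by
  by_contra! hle
  have : cos p ≤ cos (π - q) :=
    strictAntiOn_cos.antitoneOn ⟨by linarith [hq.2], by linarith [hq.1]⟩ hp (by linarith)
  rw [cos_pi_sub] at this
  linarith

/-- `det !![1, C, B; C, 1, A; B, A, 1]`; with `A, B, C` the hyperbolic cosines of the sides, it is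
positive exactly on nondegenerate triangles. -/
def gramDet (A B C : ℝ) : ℝ := 1 + 2 * A * B * C - A ^ 2 - B ^ 2 - C ^ 2

lemma gramDet_rotate (A B C : ℝ) : gramDet B C A = gramDet A B C := by
  unfold gramDet; ring

lemma gramDet_cosh (x y z : ℝ) : gramDet (cosh x) (cosh y) (cosh z) =
    (sinh y * sinh z) ^ 2 - (cosh y * cosh z - cosh x) ^ 2 := by
  unfold gramDet
  linear_combination (-sinh z ^ 2) * sinh_sq y - (cosh y ^ 2 - 1) * sinh_sq z

lemma gramDet_pos_of_triangle {x y z : ℝ} (h1 : x < y + z) (h2 : y < x + z) (h3 : z < x + y) :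
    0 < gramDet (cosh x) (cosh y) (cosh z) := by
  have hlow : cosh (y - z) < cosh x := by
    rw [cosh_lt_cosh, abs_of_pos (by linarith : 0 < x), abs_lt]
    constructor <;> linarith
  have hup : cosh x < cosh (y + z) := by
    rw [cosh_lt_cosh, abs_of_pos (by linarith : 0 < x), abs_of_pos (by linarith : 0 < y + z)]
    exact h1
  rw [cosh_sub] at hlow
  rw [cosh_add] at hup
  rw [gramDet_cosh]
  nlinarith [mul_pos (sub_pos.2 hlow) (sub_pos.2 hup)]

lemma gramDet_mul_pos {A B C u : ℝ} (hA : 1 ≤ A) (hu : 1 ≤ u) (hD : 0 < gramDet A B C) :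
    0 < gramDet A (u * B) (u * C) := by
  have key : gramDet A (u * B) (u * C) =
      gramDet A B C + (u ^ 2 - 1) * (gramDet A B C + (A ^ 2 - 1)) := by
    unfold gramDet; ring
  rw [key]
  have : 0 ≤ u ^ 2 - 1 := by nlinarith
  have : 0 ≤ A ^ 2 - 1 := by nlinarith
  positivity

section angles

variable {x y z : ℝ}

lemma cos_hypAngle (hy : 0 < y) (hz : 0 < z) (hD : 0 ≤ gramDet (cosh x) (cosh y) (cosh z)) :
    cos (hypAngle x y z) = (cosh y * cosh z - cosh x) / (sinh y * sinh z) := by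
  have hs : 0 < sinh y * sinh z := mul_pos (sinh_pos_iff.2 hy) (sinh_pos_iff.2 hz)
  rw [gramDet_cosh, sub_nonneg] at hD
  obtain ⟨hlow, hup⟩ := abs_le_of_sq_le_sq' hD hs.le
  exact cos_arccos (by rwa [le_div_iff₀ hs, neg_one_mul]) (by rwa [div_le_one hs])

lemma sin_hypAngle (hy : 0 < y) (hz : 0 < z) :
    sin (hypAngle x y z) = √(gramDet (cosh x) (cosh y) (cosh z)) / (sinh y * sinh z) := by
  have hs : 0 < sinh y * sinh z := mul_pos (sinh_pos_iff.2 hy) (sinh_pos_iff.2 hz)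
  rw [hypAngle, sin_arccos, gramDet_cosh]
  have : 1 - ((cosh y * cosh z - cosh x) / (sinh y * sinh z)) ^ 2 =
      ((sinh y * sinh z) ^ 2 - (cosh y * cosh z - cosh x) ^ 2) / (sinh y * sinh z) ^ 2 := by
    field_simp
  rw [this, sqrt_div' _ (sq_nonneg _), sqrt_sq hs.le]

end angles

lemma hypAngle_mem_Icc (x y z : ℝ) : hypAngle x y z ∈ Icc 0 π :=
  ⟨arccos_nonneg _, arccos_le_pi _⟩

/-- With `A, B, C` the hyperbolic cosines of the sides, the cosine of the area. -/
noncomputable def defectCos (A B C : ℝ) : ℝ :=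
  (1 + A + B + C) ^ 2 / ((1 + A) * (1 + B) * (1 + C)) - 1

section angleSum

variable {x y z : ℝ} (hx : 0 < x) (hy : 0 < y) (hz : 0 < z)
  (hD : 0 < gramDet (cosh x) (cosh y) (cosh z))
include hx hy hz hD

lemma cos_add_cos_hypAngle_pos : 0 < cos (hypAngle y z x) + cos (hypAngle z x y) := by
  have hsx := sinh_pos_iff.2 hx
  have hsy := sinh_pos_iff.2 hy
  have hsz := sinh_pos_iff.2 hz
  -- this is `cosh x - cosh (y - z)`
  have hlow : 0 < cosh x - cosh y * cosh z + sinh y * sinh z := by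
    nlinarith [gramDet_cosh x y z, mul_pos hsy hsz]
  have key : cos (hypAngle y z x) + cos (hypAngle z x y) =
      (cosh z * sinh y + cosh y * sinh z) * (cosh x - cosh y * cosh z + sinh y * sinh z) /
        (sinh x * sinh y * sinh z) := by
    rw [cos_hypAngle hz hx (by rw [gramDet_rotate]; exact hD.le),
      cos_hypAngle hx hy (by rw [← gramDet_rotate]; exact hD.le)]
    field_simp
    linear_combination (-cosh z * sinh z) * sinh_sq y - (cosh y * sinh y) * sinh_sq z
  rw [key]
  positivity

lemma cos_hypAngle_add_cos_add_pos :
    0 < cos (hypAngle x y z) + cos (hypAngle y z x + hypAngle z x y) := by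
  have hsx := sinh_pos_iff.2 hx
  have hsy := sinh_pos_iff.2 hy
  have hsz := sinh_pos_iff.2 hz
  have key : cos (hypAngle x y z) + cos (hypAngle y z x + hypAngle z x y) =
      (cosh x - 1) * gramDet (cosh x) (cosh y) (cosh z) / (sinh x ^ 2 * sinh y * sinh z) := by
    rw [cos_add, cos_hypAngle hy hz hD.le,
      cos_hypAngle hz hx (by rw [gramDet_rotate]; exact hD.le),
      cos_hypAngle hx hy (by rw [← gramDet_rotate]; exact hD.le), sin_hypAngle hz hx,
      sin_hypAngle hx hy, gramDet_rotate (cosh x), ← gramDet_rotate (cosh z)]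
    field_simp
    rw [sq_sqrt hD.le]
    unfold gramDet
    linear_combination (cosh y * cosh z - cosh x) * sinh_sq x
  have : 0 < cosh x - 1 := sub_pos.2 (one_lt_cosh.2 hx.ne')
  rw [key]
  positivity

lemma cos_hypAngle_sum :
    cos (hypAngle x y z + hypAngle y z x + hypAngle z x y) =
      -defectCos (cosh x) (cosh y) (cosh z) := by
  have hsx := sinh_pos_iff.2 hx
  have hsy := sinh_pos_iff.2 hy
  have hsz := sinh_pos_iff.2 hz
  rw [cos_add, cos_add, sin_add, cos_hypAngle hy hz hD.le,
      cos_hypAngle hz hx (by rw [gramDet_rotate]; exact hD.le),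
      cos_hypAngle hx hy (by rw [← gramDet_rotate]; exact hD.le), sin_hypAngle hy hz, sin_hypAngle hz hx,
      sin_hypAngle hx hy, gramDet_rotate (cosh x), ← gramDet_rotate (cosh z)]
  field_simp
  have h1 : 0 < 1 + cosh x := by positivity
  have h2 : 0 < 1 + cosh y := by positivity
  have h3 : 0 < 1 + cosh z := by positivity
  rw [sq_sqrt hD.le, defectCos, sinh_sq, sinh_sq, sinh_sq, gramDet]
  field_simp
  ring

lemma hypAngle_sum_mem_Icc :
    hypAngle x y z + hypAngle y z x + hypAngle z x y ∈ Icc 0 π := by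
  have hβγ := add_lt_pi_of_cos_add_cos_pos (hypAngle_mem_Icc y z x) (hypAngle_mem_Icc z x y)
    (cos_add_cos_hypAngle_pos hx hy hz hD)
  have hαβγ := add_lt_pi_of_cos_add_cos_pos (hypAngle_mem_Icc x y z)
    ⟨add_nonneg (hypAngle_mem_Icc y z x).1 (hypAngle_mem_Icc z x y).1, hβγ.le⟩
    (cos_hypAngle_add_cos_add_pos hx hy hz hD)
  rw [← add_assoc] at hαβγ
  exact ⟨add_nonneg (add_nonneg (hypAngle_mem_Icc x y z).1 (hypAngle_mem_Icc y z x).1)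
    (hypAngle_mem_Icc z x y).1, hαβγ.le⟩

end angleSum

lemma defectCos_mul_lt {A B C u : ℝ} (hA : 1 < A) (hB : 0 < B) (hC : 0 < C)
    (hD : 0 < gramDet A B C) (hu : 1 < u) : defectCos A (u * B) (u * C) < defectCos A B C := by
  obtain ⟨v, hv, rfl⟩ : ∃ v, 0 < v ∧ u = 1 + v := ⟨u - 1, by linarith, by ring⟩
  obtain ⟨w, hw, rfl⟩ : ∃ w, 0 < w ∧ A = 1 + w := ⟨A - 1, by linarith, by ring⟩
  have hg : 0 < 2 * (2 + w) * (B * C) - (B + C) ^ 2 := by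
    unfold gramDet at hD; nlinarith
  set g := 2 * (2 + w) * (B * C) - (B + C) ^ 2
  unfold defectCos
  rw [sub_lt_sub_iff_right, div_lt_div_iff₀ (by positivity) (by positivity), ← sub_pos]
  -- the difference vanishes at `v = 0`; the cofactor of `v` is linear in `v`
  refine (show 0 < (2 + w) * v * (v * ((2 + w) * g + 2 * (B + C) * g + (B + C) ^ 2 * w) / 2 +
      (2 + w + B + C) * (g + (B + C) * w)) by positivity).trans_eq ?_
  simp only [g]
  ring

lemma pos_of_cosh_eq_exp_mul_cosh {s y t : ℝ} (hs : 0 ≤ s) (ht : 0 < t)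
    (h : cosh s = exp t * cosh y) : 0 < s := by
  refine hs.lt_of_ne (Ne.symm (one_lt_cosh.1 ?_))
  rw [h]
  exact one_lt_mul_of_lt_of_le (one_lt_exp_iff.2 ht) (one_le_cosh y)

/-- Let `a, b, c` be positive reals satisfying the strict triangle inequalities,
`t > 0`, and let `b_t, c_t` be the unique nonnegative reals with
`cosh b_t = eᵗ · cosh b`, `cosh c_t = eᵗ · cosh c`. Then the angle sum of the
hyperbolic triangle with sides `a, b_t, c_t` is strictly smaller than that of the
triangle with sides `a, b, c`; equivalently, the angle defect (the hyperbolic area)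
is strictly larger for the deformed triangle. -/
theorem hyperbolic_deformed_area_increases (a b c t : ℝ)
    (ha : 0 < a) (hb : 0 < b) (hc : 0 < c)
    (h1 : a < b + c) (h2 : b < a + c) (h3 : c < a + b) (ht : 0 < t)
    (bt ct : ℝ) (hbt0 : 0 ≤ bt) (hct0 : 0 ≤ ct)
    (hbt : Real.cosh bt = Real.exp t * Real.cosh b)
    (hct : Real.cosh ct = Real.exp t * Real.cosh c) :
    hypAngle a bt ct + hypAngle bt ct a + hypAngle ct a bt <
      hypAngle a b c + hypAngle b c a + hypAngle c a b := by
  have hD := gramDet_pos_of_triangle h1 h2 h3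
  have hDt : 0 < gramDet (cosh a) (cosh bt) (cosh ct) := by
    rw [hbt, hct]
    exact gramDet_mul_pos (one_le_cosh a) (one_le_exp ht.le) hD
  have hbt' := pos_of_cosh_eq_exp_mul_cosh hbt0 ht hbt
  have hct' := pos_of_cosh_eq_exp_mul_cosh hct0 ht hct
  rw [← strictAntiOn_cos.lt_iff_gt (hypAngle_sum_mem_Icc ha hb hc hD)
    (hypAngle_sum_mem_Icc ha hbt' hct' hDt), cos_hypAngle_sum ha hb hc hD,
    cos_hypAngle_sum ha hbt' hct' hDt, hbt, hct, neg_lt_neg_iff]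
  exact defectCos_mul_lt (one_lt_cosh.2 ha.ne') (cosh_pos b) (cosh_pos c) hD
    (one_lt_exp_iff.2 ht)
end
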